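/- Let F : ℝ → ℝ be monotone nondecreasing with 0 ≤ F(x) ≤ 1 for all x, let τ ∈ ℝ be a threshold and y ∈ ℝ an observation. Define the distribution function censored at τ by F̃_τ(x) = 0 if x < τ and F̃_τ(x) = F(x) if x ≥ τ. Then twCRPS_τ(F, y) = CRPS(F̃_τ, v_τ(y)), i.e. the threshold-weighted CRPS of F at y equals the CRPS of the censored distribution evaluated at the censored observation v_τ(y) = max(y, τ). -/

import Mathlib

open MeasureTheory Set

/-- Threshold-weighted CRPS: `twCRPS_τ(F, y) = ∫_τ^∞ (F(z) − 𝟙{z ≥ y})² dz`. -/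
noncomputable def twCRPS (F : ℝ → ℝ) (τ y : ℝ) : ℝ :=
  ∫ z in Set.Ioi τ, (F z - if y ≤ z then (1 : ℝ) else 0) ^ 2

/-- CRPS: `CRPS(F, y) = ∫_{-∞}^∞ (F(z) − 𝟙{z ≥ y})² dz`. -/
noncomputable def CRPS (F : ℝ → ℝ) (y : ℝ) : ℝ :=
  ∫ z, (F z - if y ≤ z then (1 : ℝ) else 0) ^ 2

/-- Distribution function censored at `τ`. -/
noncomputable def censor (F : ℝ → ℝ) (τ : ℝ) : ℝ → ℝ :=
  fun x => if x < τ then 0 else F x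

/-! Below `τ` both the censored distribution function and the step at `max y τ` vanish, and from
`τ` on they coincide with `F` and the step at `y`; so the CRPS integrand of the censored forecast
is the twCRPS integrand restricted to `[τ, ∞)`, and `Ioi τ` and `Ici τ` differ by a null set. -/

theorem censor_of_lt {F : ℝ → ℝ} {τ x : ℝ} (h : x < τ) : censor F τ x = 0 :=
  if_pos h

theorem censor_of_le {F : ℝ → ℝ} {τ x : ℝ} (h : τ ≤ x) : censor F τ x = F x :=
  if_neg h.not_gt

theorem indicator_Ici_crps_integrand_eq_censor (F : ℝ → ℝ) (τ y : ℝ) :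
    (Ici τ).indicator (fun z => (F z - if y ≤ z then (1 : ℝ) else 0) ^ 2) =
      fun z => (censor F τ z - if max y τ ≤ z then (1 : ℝ) else 0) ^ 2 := by
  ext z
  rcases lt_or_ge z τ with hz | hz
  · have hstep : ¬ max y τ ≤ z := fun h => hz.not_ge ((le_max_right y τ).trans h)
    simp [indicator_of_notMem (notMem_Ici.2 hz), censor_of_lt hz, hstep]
  · simp [censor_of_le hz, hz]

theorem twCRPS_eq_CRPS_censored (F : ℝ → ℝ) (τ y : ℝ) :
    twCRPS F τ y = CRPS (censor F τ) (max y τ) := by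
  calc twCRPS F τ y = ∫ z in Ici τ, (F z - if y ≤ z then (1 : ℝ) else 0) ^ 2 :=
        setIntegral_congr_set Ioi_ae_eq_Ici
    _ = ∫ z, (Ici τ).indicator (fun z => (F z - if y ≤ z then (1 : ℝ) else 0) ^ 2) z :=
        (integral_indicator measurableSet_Ici).symm
    _ = CRPS (censor F τ) (max y τ) := by
        rw [indicator_Ici_crps_integrand_eq_censor]; rfl
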